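/- Let X and Y be locally compact, connected Hausdorff spaces, ρ a quasi-integral on C_c(X) with corresponding compact-finite topological measure μ, η a quasi-integral on C_c(Y) with corresponding finite topological measure ν, and suppose η × ρ is a quasi-integral with corresponding topological measure ν × μ on X × Y. If A ⊆ X and B ⊆ Y are both open, then (ν × μ)(A × B) = μ(A)·ν(B). If in addition μ is finite, the same holds whenever A ⊆ X and B ⊆ Y are both compact. -/

import Mathlib

open scoped ENNReal CompactlySupported
open CompactlySupportedContinuousMap

namespace QLF

variable {X Y : Type*}

/-- Membership in the singly generated subalgebra `B(f)`:
`g ∈ B(f)` iff `g = φ ∘ f` for some continuous `φ` with `φ 0 = 0`. -/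
def InB [TopologicalSpace X] (f g : C_c(X, ℝ)) : Prop :=
  ∃ φ : C(ℝ, ℝ), φ 0 = 0 ∧ ∀ x, g x = φ (f x)

/-- A quasi-integral (quasi-linear functional) on `C_c(X)`. -/
structure IsQuasiIntegral [TopologicalSpace X] (ρ : C_c(X, ℝ) → ℝ) : Prop where
  smul : ∀ (a : ℝ) (f : C_c(X, ℝ)), ρ (a • f) = a * ρ f
  add : ∀ f g h : C_c(X, ℝ), InB f g → InB f h → ρ (g + h) = ρ g + ρ h
  pos : ∀ f : C_c(X, ℝ), (∀ x, 0 ≤ f x) → 0 ≤ ρ f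

/-- The value of the topological measure corresponding to `ρ` on an open set. -/
noncomputable def qiOpen [TopologicalSpace X] (ρ : C_c(X, ℝ) → ℝ) (U : Set X) : ℝ≥0∞ :=
  ⨆ (f : C_c(X, ℝ)) (_ : (∀ x, 0 ≤ f x ∧ f x ≤ 1) ∧ tsupport f ⊆ U), ENNReal.ofReal (ρ f)

open Classical in
/-- The topological measure corresponding to a quasi-integral `ρ`:
on open sets given by `qiOpen`, on other (closed) sets by outer regularity. -/
noncomputable def qiMeas [TopologicalSpace X] (ρ : C_c(X, ℝ) → ℝ) (A : Set X) : ℝ≥0∞ :=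
  if IsOpen A then qiOpen ρ A
  else ⨅ (U : Set X) (_ : IsOpen U ∧ A ⊆ U), qiOpen ρ U

/-- A topological measure on `X` (as a set function on all sets; only its values on
open and closed sets are constrained/meaningful). -/
def IsTopMeasure [TopologicalSpace X] (μ : Set X → ℝ≥0∞) : Prop :=
  (∀ A B : Set X, Disjoint A B → (IsCompact A ∨ IsOpen A) → (IsCompact B ∨ IsOpen B) →
      (IsCompact (A ∪ B) ∨ IsOpen (A ∪ B)) → μ (A ∪ B) = μ A + μ B) ∧
  (∀ U : Set X, IsOpen U → μ U = ⨆ (K : Set X) (_ : IsCompact K ∧ K ⊆ U), μ K) ∧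
  (∀ F : Set X, IsClosed F → μ F = ⨅ (U : Set X) (_ : IsOpen U ∧ F ⊆ U), μ U)

/-- A simple topological measure: assumes only the values 0 and 1 on open and closed sets. -/
def IsSimpleTM [TopologicalSpace X] (μ : Set X → ℝ≥0∞) : Prop :=
  IsTopMeasure μ ∧ ∀ A : Set X, IsOpen A ∨ IsClosed A → μ A = 0 ∨ μ A = 1

/-- A simple quasi-integral: its corresponding topological measure assumes only 0 and 1. -/
def IsSimpleQI [TopologicalSpace X] (ρ : C_c(X, ℝ) → ℝ) : Prop :=
  ∀ A : Set X, IsOpen A ∨ IsClosed A → qiMeas ρ A = 0 ∨ qiMeas ρ A = 1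

/-- An almost simple quasi-integral: its corresponding topological measure is a positive
scalar multiple of a simple topological measure. -/
def IsAlmostSimpleQI [TopologicalSpace X] (ρ : C_c(X, ℝ) → ℝ) : Prop :=
  ∃ (c : ℝ≥0∞) (μ' : Set X → ℝ≥0∞), 0 < c ∧ c ≠ ∞ ∧ IsSimpleTM μ' ∧
    ∀ A : Set X, IsOpen A ∨ IsClosed A → qiMeas ρ A = c * μ' A

/-- The composition `φ ∘ f` as an element of `C_c(X, ℝ)`, for continuous `φ` with `φ 0 = 0`. -/
noncomputable def compCc [TopologicalSpace X] (φ : C(ℝ, ℝ)) (hφ : φ 0 = 0)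
    (f : C_c(X, ℝ)) : C_c(X, ℝ) :=
  ⟨⟨fun x => φ (f x), φ.continuous.comp f.continuous⟩, f.hasCompactSupport'.comp_left hφ⟩

section Products

variable [TopologicalSpace X] [TopologicalSpace Y]

/-- The section `f_y ∈ C_c(X)` of `f ∈ C_c(X × Y)`, `f_y (x) = f (x, y)`. -/
noncomputable def fiberY [T2Space X] (f : C_c(X × Y, ℝ)) (y : Y) : C_c(X, ℝ) :=
  ⟨⟨fun x => f (x, y), f.continuous.comp (continuous_id.prodMk continuous_const)⟩,
    HasCompactSupport.intro (f.hasCompactSupport'.image continuous_fst)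
      (fun x hx => by
        by_contra h
        exact hx ⟨(x, y), subset_tsupport _ h, rfl⟩)⟩

/-- The section `f_x ∈ C_c(Y)` of `f ∈ C_c(X × Y)`, `f_x (y) = f (x, y)`. -/
noncomputable def fiberX [T2Space Y] (f : C_c(X × Y, ℝ)) (x : X) : C_c(Y, ℝ) :=
  ⟨⟨fun y => f (x, y), f.continuous.comp (continuous_const.prodMk continuous_id)⟩,
    HasCompactSupport.intro (f.hasCompactSupport'.image continuous_snd)
      (fun y hy => by
        by_contra h
        exact hy ⟨(x, y), subset_tsupport _ h, rfl⟩)⟩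

/-- `T_ρ(f) (y) = ρ (f_y)` as a bare function on `Y`. -/
noncomputable def Tmap [T2Space X] (ρ : C_c(X, ℝ) → ℝ) (f : C_c(X × Y, ℝ)) : Y → ℝ :=
  fun y => ρ (fiberY f y)

/-- `S_η(f) (x) = η (f_x)` as a bare function on `X`. -/
noncomputable def Smap [T2Space Y] (η : C_c(Y, ℝ) → ℝ) (f : C_c(X × Y, ℝ)) : X → ℝ :=
  fun x => η (fiberX f x)

open Classical in
/-- `T_ρ(f)` as an element of `C_c(Y, ℝ)` (when `ρ` is a quasi-integral, `T_ρ(f)` is indeed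
continuous with compact support, and this definition takes the first branch). -/
noncomputable def TCc [T2Space X] (ρ : C_c(X, ℝ) → ℝ) (f : C_c(X × Y, ℝ)) : C_c(Y, ℝ) :=
  if h : Continuous (Tmap ρ f) ∧ HasCompactSupport (Tmap ρ f)
  then ⟨⟨Tmap ρ f, h.1⟩, h.2⟩ else 0

open Classical in
/-- `S_η(f)` as an element of `C_c(X, ℝ)`. -/
noncomputable def SCc [T2Space Y] (η : C_c(Y, ℝ) → ℝ) (f : C_c(X × Y, ℝ)) : C_c(X, ℝ) :=
  if h : Continuous (Smap η f) ∧ HasCompactSupport (Smap η f)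
  then ⟨⟨Smap η f, h.1⟩, h.2⟩ else 0

/-- The repeated quasi-integral `(η × ρ) (f) = η (T_ρ (f))`. -/
noncomputable def prodQI [T2Space X] (η : C_c(Y, ℝ) → ℝ) (ρ : C_c(X, ℝ) → ℝ) :
    C_c(X × Y, ℝ) → ℝ := fun f => η (TCc ρ f)

/-- The repeated quasi-integral `(ρ × η) (f) = ρ (S_η (f))`. -/
noncomputable def prodQI' [T2Space Y] (ρ : C_c(X, ℝ) → ℝ) (η : C_c(Y, ℝ) → ℝ) :
    C_c(X × Y, ℝ) → ℝ := fun f => ρ (SCc η f)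

/-- The tensor product `(g ⊗ h) (x, y) = g (x) * h (y)` as an element of `C_c(X × Y, ℝ)`. -/
noncomputable def tensor (g : C_c(X, ℝ)) (h : C_c(Y, ℝ)) : C_c(X × Y, ℝ) :=
  ⟨⟨fun p => g p.1 * h p.2,
      (g.continuous.comp continuous_fst).mul (h.continuous.comp continuous_snd)⟩,
    HasCompactSupport.intro' (g.hasCompactSupport'.prod h.hasCompactSupport')
      ((isClosed_tsupport _).prod (isClosed_tsupport _))
      (fun p hp => by
        rcases not_and_or.mp (by simpa [Set.mem_prod] using hp) with h1 | h1
        · simp [image_eq_zero_of_notMem_tsupport h1]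
        · simp [image_eq_zero_of_notMem_tsupport h1])⟩

end Products

/-- A topological measure is subadditive (equivalently, extends to a Borel measure). -/
def IsSubadditiveOnOpens [TopologicalSpace X] (μ : Set X → ℝ≥0∞) : Prop :=
  ∀ U V : Set X, IsOpen U → IsOpen V → μ (U ∪ V) ≤ μ U + μ V

/-- `μ` is a positive scalar multiple of a point mass `δ_{x₀}` (on open and closed sets). -/
def IsPointMassMultiple [TopologicalSpace X] (μ : Set X → ℝ≥0∞) : Prop :=
  ∃ (c : ℝ≥0∞) (x₀ : X), 0 < c ∧ c ≠ ∞ ∧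
    ∀ A : Set X, IsOpen A ∨ IsClosed A →
      μ A = c * A.indicator (fun _ => (1 : ℝ≥0∞)) x₀

end QLF

/-!
For `0 ≤ F ≤ 1` supported in `A × B`, the fibre integral `g y = ρ(F_y)` is at most `μ(A)` and
vanishes off `B`, but its closed support need not lie in `B`. Split `g = (g - ε)⁺ + min g ε`:
both summands lie in `B(g)`, so `η` is additive on them; the first has closed support in `B`, and
the second costs at most `ε ν(Y)`, which is where finiteness of `ν` enters. This gives
`(ν × μ)(A × B) ≤ μ(A) ν(B)` for open `A`, `B`, and tensor products `f ⊗ g` give the reverse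
inequality. For compact sets the formula passes to infima over open neighbourhoods, with the tube
lemma for `≥`.
-/

lemma ENNReal.le_of_forall_pos_le_add_ofReal_mul {a b c : ℝ≥0∞} (hc : c ≠ ∞)
    (h : ∀ ε : ℝ, 0 < ε → a ≤ b + ENNReal.ofReal ε * c) : a ≤ b := by
  have hε : Filter.Tendsto ENNReal.ofReal (nhdsWithin 0 (Set.Ioi 0)) (nhds 0) := by
    simpa using (ENNReal.continuous_ofReal.tendsto 0).mono_left nhdsWithin_le_nhds
  have hlim : Filter.Tendsto (fun ε : ℝ => b + ENNReal.ofReal ε * c)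
      (nhdsWithin 0 (Set.Ioi 0)) (nhds b) := by
    simpa using tendsto_const_nhds.add (ENNReal.Tendsto.mul_const hε (Or.inr hc))
  exact ge_of_tendsto hlim (eventually_nhdsWithin_of_forall h)

namespace QLF

section QuasiIntegral

variable {X : Type*} [TopologicalSpace X] {ρ : C_c(X, ℝ) → ℝ}

lemma IsQuasiIntegral.map_zero (hρ : IsQuasiIntegral ρ) : ρ 0 = 0 := by
  simpa using hρ.smul 0 0

lemma IsQuasiIntegral.eq_add_compCc (hρ : IsQuasiIntegral ρ) (f : C_c(X, ℝ))
    {φ ψ : C(ℝ, ℝ)} (hφ : φ 0 = 0) (hψ : ψ 0 = 0) (hφψ : ∀ t, φ t + ψ t = t) :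
    ρ f = ρ (compCc φ hφ f) + ρ (compCc ψ hψ f) := by
  have hsum : compCc φ hφ f + compCc ψ hψ f = f := by
    ext x
    exact hφψ (f x)
  calc ρ f = ρ (compCc φ hφ f + compCc ψ hψ f) := by rw [hsum]
    _ = ρ (compCc φ hφ f) + ρ (compCc ψ hψ f) :=
      hρ.add f _ _ ⟨φ, hφ, fun _ => rfl⟩ ⟨ψ, hψ, fun _ => rfl⟩

lemma ofReal_le_qiOpen (ρ : C_c(X, ℝ) → ℝ) {U : Set X} {f : C_c(X, ℝ)}
    (hf : ∀ x, 0 ≤ f x ∧ f x ≤ 1) (hfU : tsupport f ⊆ U) :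
    ENNReal.ofReal (ρ f) ≤ qiOpen ρ U :=
  le_iSup₂_of_le f ⟨hf, hfU⟩ le_rfl

lemma qiOpen_mono (ρ : C_c(X, ℝ) → ℝ) {U V : Set X} (h : U ⊆ V) :
    qiOpen ρ U ≤ qiOpen ρ V :=
  iSup₂_le fun _ hf => ofReal_le_qiOpen ρ hf.1 (hf.2.trans h)

lemma qiMeas_of_isOpen (ρ : C_c(X, ℝ) → ℝ) {U : Set X} (hU : IsOpen U) :
    qiMeas ρ U = qiOpen ρ U :=
  if_pos hU

lemma qiMeas_eq_iInf (ρ : C_c(X, ℝ) → ℝ) (S : Set X) :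
    qiMeas ρ S = ⨅ (U : Set X) (_ : IsOpen U ∧ S ⊆ U), qiOpen ρ U := by
  by_cases hS : IsOpen S
  · rw [qiMeas_of_isOpen ρ hS]
    exact le_antisymm (le_iInf₂ fun U hU => qiOpen_mono ρ hU.2) (iInf₂_le S ⟨hS, subset_rfl⟩)
  · rw [qiMeas, if_neg hS]

lemma qiMeas_le_qiOpen (ρ : C_c(X, ℝ) → ℝ) {S U : Set X} (hU : IsOpen U) (hSU : S ⊆ U) :
    qiMeas ρ S ≤ qiOpen ρ U := by
  rw [qiMeas_eq_iInf]
  exact iInf₂_le U ⟨hU, hSU⟩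

lemma IsQuasiIntegral.ofReal_le_ofReal_mul_qiOpen (hρ : IsQuasiIntegral ρ) {k : C_c(X, ℝ)}
    {c : ℝ} {U : Set X} (hk0 : ∀ x, 0 ≤ k x) (hkc : ∀ x, k x ≤ c) (hkU : tsupport k ⊆ U) :
    ENNReal.ofReal (ρ k) ≤ ENNReal.ofReal c * qiOpen ρ U := by
  rcases le_or_gt c 0 with hc | hc
  · have hk : k = 0 := by
      ext x
      exact le_antisymm ((hkc x).trans hc) (hk0 x)
    simp [hk, hρ.map_zero]
  have hk : k = c • c⁻¹ • k := by rw [smul_smul, mul_inv_cancel₀ hc.ne', one_smul]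
  have hnorm : ∀ x, 0 ≤ (c⁻¹ • k) x ∧ (c⁻¹ • k) x ≤ 1 := fun x =>
    ⟨mul_nonneg (inv_nonneg.2 hc.le) (hk0 x), (inv_mul_le_one₀ hc).2 (hkc x)⟩
  rw [hk, hρ.smul, ENNReal.ofReal_mul hc.le]
  gcongr
  exact ofReal_le_qiOpen ρ hnorm ((tsupport_smul_subset_right (fun _ => c⁻¹) k).trans hkU)

lemma IsQuasiIntegral.ofReal_le_mul_qiOpen (hρ : IsQuasiIntegral ρ) {k : C_c(X, ℝ)}
    {c : ℝ≥0∞} {U : Set X} (hk0 : ∀ x, 0 ≤ k x) (hkc : ∀ x, ENNReal.ofReal (k x) ≤ c)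
    (hkU : tsupport k ⊆ U) :
    ENNReal.ofReal (ρ k) ≤ c * qiOpen ρ U := by
  rcases eq_or_ne c ∞ with rfl | hc
  · rcases eq_or_ne (qiOpen ρ U) 0 with hU | hU
    · obtain ⟨C, hC⟩ := k.continuous.bounded_above_of_compact_support k.hasCompactSupport'
      simpa [hU] using hρ.ofReal_le_ofReal_mul_qiOpen hk0
        (fun x => (Real.le_norm_self _).trans (hC x)) hkU
    · simp [ENNReal.top_mul hU]
  · rw [← ENNReal.ofReal_toReal hc]
    exact hρ.ofReal_le_ofReal_mul_qiOpen hk0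
      (fun x => (ENNReal.ofReal_le_iff_le_toReal hc).1 (hkc x)) hkU

lemma IsQuasiIntegral.ofReal_le_mul_qiOpen_add (hρ : IsQuasiIntegral ρ) {g : C_c(X, ℝ)}
    {c : ℝ≥0∞} {U : Set X} {ε : ℝ} (hε : 0 < ε) (hg0 : ∀ x, 0 ≤ g x)
    (hgc : ∀ x, ENNReal.ofReal (g x) ≤ c) (hgU : Function.support g ⊆ U) :
    ENNReal.ofReal (ρ g) ≤ c * qiOpen ρ U + ENNReal.ofReal ε * qiOpen ρ Set.univ := by
  let φ : C(ℝ, ℝ) := ⟨fun t => max (t - ε) 0, by fun_prop⟩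
  let ψ : C(ℝ, ℝ) := ⟨fun t => min t ε, by fun_prop⟩
  have hφ : φ 0 = 0 := max_eq_right (by simpa using hε.le)
  have hψ : ψ 0 = 0 := min_eq_left hε.le
  have hφψ : ∀ t, φ t + ψ t = t := fun t => by
    change max (t - ε) 0 + min t ε = t
    rcases le_total t ε with h | h
    · rw [max_eq_right (by linarith), min_eq_left h, zero_add]
    · rw [max_eq_left (by linarith), min_eq_right h, sub_add_cancel]
  have hlarge : tsupport (compCc φ hφ g) ⊆ U := by
    have hsub : Function.support (compCc φ hφ g) ⊆ {x | ε ≤ g x} := fun x hx =>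
      le_of_not_gt fun h : g x < ε => hx (max_eq_right (by linarith))
    exact (closure_minimal hsub (isClosed_le continuous_const g.continuous)).trans
      fun x hx => hgU (hε.trans_le hx).ne'
  have hbound_large : ENNReal.ofReal (ρ (compCc φ hφ g)) ≤ c * qiOpen ρ U :=
    hρ.ofReal_le_mul_qiOpen (fun x => le_max_right _ _)
      (fun x => (ENNReal.ofReal_le_ofReal (max_le (by linarith) (hg0 x))).trans (hgc x)) hlarge
  have hbound_small :
      ENNReal.ofReal (ρ (compCc ψ hψ g)) ≤ ENNReal.ofReal ε * qiOpen ρ Set.univ :=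
    hρ.ofReal_le_ofReal_mul_qiOpen (fun x => le_min (hg0 x) hε.le)
      (fun x => min_le_right _ _) (Set.subset_univ _)
  rw [hρ.eq_add_compCc g hφ hψ hφψ]
  exact ENNReal.ofReal_add_le.trans (add_le_add hbound_large hbound_small)

lemma IsQuasiIntegral.ofReal_le_mul_qiOpen_of_support_subset (hρ : IsQuasiIntegral ρ)
    (hfin : qiOpen ρ Set.univ ≠ ∞) {g : C_c(X, ℝ)} {c : ℝ≥0∞} {U : Set X}
    (hg0 : ∀ x, 0 ≤ g x) (hgc : ∀ x, ENNReal.ofReal (g x) ≤ c)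
    (hgU : Function.support g ⊆ U) :
    ENNReal.ofReal (ρ g) ≤ c * qiOpen ρ U :=
  ENNReal.le_of_forall_pos_le_add_ofReal_mul hfin fun _ hε =>
    hρ.ofReal_le_mul_qiOpen_add hε hg0 hgc hgU

end QuasiIntegral

section Product

variable {X Y : Type*} [TopologicalSpace X] [T2Space X] [TopologicalSpace Y]
  {ρ : C_c(X, ℝ) → ℝ} {η : C_c(Y, ℝ) → ℝ}

lemma tsupport_fiberY_subset (F : C_c(X × Y, ℝ)) (y : Y) :
    tsupport (fiberY F y) ⊆ (·, y) ⁻¹' tsupport F :=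
  closure_minimal (fun _ hx => subset_tsupport F hx)
    ((isClosed_tsupport F).preimage (by fun_prop))

lemma TCc_apply_eq_or (ρ : C_c(X, ℝ) → ℝ) (F : C_c(X × Y, ℝ)) (y : Y) :
    TCc ρ F y = ρ (fiberY F y) ∨ TCc ρ F y = 0 := by
  unfold TCc
  split_ifs
  exacts [Or.inl rfl, Or.inr rfl]

lemma prodQI_tensor (hρ : IsQuasiIntegral ρ) (hη : IsQuasiIntegral η)
    (f : C_c(X, ℝ)) (g : C_c(Y, ℝ)) :
    prodQI η ρ (tensor f g) = ρ f * η g := by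
  have hfiber : ∀ y, fiberY (tensor f g) y = g y • f := fun y => by
    ext x
    exact mul_comm (f x) (g y)
  have hT : Tmap ρ (tensor f g) = ⇑(ρ f • g) := funext fun y => by
    simp only [Tmap, hfiber, hρ.smul, CompactlySupportedContinuousMap.smul_apply, smul_eq_mul,
      mul_comm]
  have hTCc : TCc ρ (tensor f g) = ρ f • g := by
    rw [TCc, dif_pos (by rw [hT]; exact ⟨(ρ f • g).continuous, (ρ f • g).hasCompactSupport'⟩)]
    ext y
    exact congrFun hT y
  rw [prodQI, hTCc, hη.smul]

omit [T2Space X] in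
lemma tsupport_tensor_subset (f : C_c(X, ℝ)) (g : C_c(Y, ℝ)) :
    tsupport (tensor f g) ⊆ tsupport f ×ˢ tsupport g :=
  closure_minimal (fun _ hp => ⟨subset_tsupport f (left_ne_zero_of_mul hp),
      subset_tsupport g (right_ne_zero_of_mul hp)⟩)
    ((isClosed_tsupport f).prod (isClosed_tsupport g))

lemma mul_qiOpen_le_qiOpen_prod (hρ : IsQuasiIntegral ρ) (hη : IsQuasiIntegral η)
    (A : Set X) (B : Set Y) :
    qiOpen ρ A * qiOpen η B ≤ qiOpen (prodQI η ρ) (A ×ˢ B) := by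
  simp only [qiOpen, ENNReal.iSup_mul, ENNReal.mul_iSup, iSup_le_iff]
  intro g hg f hf
  rw [← ENNReal.ofReal_mul (hρ.pos f fun x => (hf.1 x).1), ← prodQI_tensor hρ hη]
  refine ofReal_le_qiOpen _ (fun p => ⟨mul_nonneg (hf.1 p.1).1 (hg.1 p.2).1,
    mul_le_one₀ (hf.1 p.1).2 (hg.1 p.2).1 (hg.1 p.2).2⟩) ?_
  exact (tsupport_tensor_subset f g).trans (Set.prod_mono hf.2 hg.2)

lemma qiOpen_prod_le_mul (hρ : IsQuasiIntegral ρ) (hη : IsQuasiIntegral η)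
    (hνfin : qiOpen η Set.univ ≠ ∞) (A : Set X) (B : Set Y) :
    qiOpen (prodQI η ρ) (A ×ˢ B) ≤ qiOpen ρ A * qiOpen η B := by
  refine iSup₂_le fun F hF => hη.ofReal_le_mul_qiOpen_of_support_subset hνfin
    (fun y => ?_) (fun y => ?_) (fun y hy => ?_)
  · rcases TCc_apply_eq_or ρ F y with h | h
    · rw [h]
      exact hρ.pos _ fun x => (hF.1 (x, y)).1
    · exact h.ge
  · rcases TCc_apply_eq_or ρ F y with h | h <;> rw [h]
    · exact ofReal_le_qiOpen ρ (fun x => hF.1 (x, y))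
        fun x hx => (hF.2 (tsupport_fiberY_subset F y hx)).1
    · simp
  · by_contra hyB
    have hfiber : fiberY F y = 0 := by
      ext x
      exact image_eq_zero_of_notMem_tsupport (f := F) fun hmem => hyB (hF.2 hmem).2
    rcases TCc_apply_eq_or ρ F y with h | h <;> rw [Function.mem_support, h] at hy
    exacts [hy (by rw [hfiber, hρ.map_zero]), hy rfl]

lemma qiOpen_prod (hρ : IsQuasiIntegral ρ) (hη : IsQuasiIntegral η)
    (hνfin : qiOpen η Set.univ ≠ ∞) (A : Set X) (B : Set Y) :
    qiOpen (prodQI η ρ) (A ×ˢ B) = qiOpen ρ A * qiOpen η B :=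
  le_antisymm (qiOpen_prod_le_mul hρ hη hνfin A B) (mul_qiOpen_le_qiOpen_prod hρ hη A B)

lemma qiMeas_prod_le_mul (hρ : IsQuasiIntegral ρ) (hη : IsQuasiIntegral η)
    (hμfin : qiOpen ρ Set.univ ≠ ∞) (hνfin : qiOpen η Set.univ ≠ ∞) (A : Set X) (B : Set Y) :
    qiMeas (prodQI η ρ) (A ×ˢ B) ≤ qiMeas ρ A * qiMeas η B := by
  rw [qiMeas_eq_iInf ρ, qiMeas_eq_iInf η, iInf_subtype', iInf_subtype']
  refine ENNReal.le_iInf_mul_iInf ⟨⟨_, isOpen_univ, Set.subset_univ A⟩, hμfin⟩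
    ⟨⟨_, isOpen_univ, Set.subset_univ B⟩, hνfin⟩ fun U V => ?_
  rw [← qiOpen_prod hρ hη hνfin]
  exact qiMeas_le_qiOpen _ (U.2.1.prod V.2.1) (Set.prod_mono U.2.2 V.2.2)

lemma mul_qiMeas_le_qiMeas_prod (hρ : IsQuasiIntegral ρ) (hη : IsQuasiIntegral η)
    (hνfin : qiOpen η Set.univ ≠ ∞) {A : Set X} {B : Set Y}
    (hA : IsCompact A) (hB : IsCompact B) :
    qiMeas ρ A * qiMeas η B ≤ qiMeas (prodQI η ρ) (A ×ˢ B) := by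
  rw [qiMeas_eq_iInf (prodQI η ρ)]
  refine le_iInf₂ fun W hW => ?_
  obtain ⟨U, V, hU, hV, hAU, hBV, hUVW⟩ := generalized_tube_lemma hA hB hW.1 hW.2
  calc qiMeas ρ A * qiMeas η B ≤ qiOpen ρ U * qiOpen η V :=
        mul_le_mul' (qiMeas_le_qiOpen ρ hU hAU) (qiMeas_le_qiOpen η hV hBV)
    _ = qiOpen (prodQI η ρ) (U ×ˢ V) := (qiOpen_prod hρ hη hνfin U V).symm
    _ ≤ qiOpen (prodQI η ρ) W := qiOpen_mono _ hUVW

end Product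

theorem statement16_general {X Y : Type*}
    [TopologicalSpace X] [T2Space X]
    [TopologicalSpace Y]
    (ρ : C_c(X, ℝ) → ℝ) (η : C_c(Y, ℝ) → ℝ)
    (hρ : IsQuasiIntegral ρ) (hη : IsQuasiIntegral η)
    (hνfin : qiMeas η (Set.univ : Set Y) ≠ ∞) :
    (∀ (A : Set X) (B : Set Y), IsOpen A → IsOpen B →
      qiMeas (prodQI η ρ) (A ×ˢ B) = qiMeas ρ A * qiMeas η B) ∧
    (qiMeas ρ (Set.univ : Set X) ≠ ∞ →
      ∀ (A : Set X) (B : Set Y), IsCompact A → IsCompact B →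
        qiMeas (prodQI η ρ) (A ×ˢ B) = qiMeas ρ A * qiMeas η B) := by
  rw [qiMeas_of_isOpen η isOpen_univ] at hνfin
  refine ⟨fun A B hA hB => ?_, fun hμfin A B hA hB => ?_⟩
  · rw [qiMeas_of_isOpen _ (hA.prod hB), qiMeas_of_isOpen ρ hA, qiMeas_of_isOpen η hB]
    exact qiOpen_prod hρ hη hνfin A B
  · rw [qiMeas_of_isOpen ρ isOpen_univ] at hμfin
    exact le_antisymm (qiMeas_prod_le_mul hρ hη hμfin hνfin A B)
      (mul_qiMeas_le_qiMeas_prod hρ hη hνfin hA hB)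

theorem statement16 {X Y : Type*}
    [TopologicalSpace X] [LocallyCompactSpace X] [T2Space X] [ConnectedSpace X]
    [TopologicalSpace Y] [LocallyCompactSpace Y] [T2Space Y] [ConnectedSpace Y]
    (ρ : C_c(X, ℝ) → ℝ) (η : C_c(Y, ℝ) → ℝ)
    (hρ : IsQuasiIntegral ρ) (hη : IsQuasiIntegral η)
    (hμcf : ∀ K : Set X, IsCompact K → qiMeas ρ K ≠ ∞)
    (hνfin : qiMeas η (Set.univ : Set Y) ≠ ∞)
    (hqi : IsQuasiIntegral (prodQI η ρ)) :
    (∀ (A : Set X) (B : Set Y), IsOpen A → IsOpen B →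
      qiMeas (prodQI η ρ) (A ×ˢ B) = qiMeas ρ A * qiMeas η B) ∧
    (qiMeas ρ (Set.univ : Set X) ≠ ∞ →
      ∀ (A : Set X) (B : Set Y), IsCompact A → IsCompact B →
        qiMeas (prodQI η ρ) (A ×ˢ B) = qiMeas ρ A * qiMeas η B) :=
  statement16_general ρ η hρ hη hνfin
end QLF
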